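/- One-step path-coupling contraction for the discrete-time kernel: assume (A3), fix j=1,…,d and i with i,i+he_j∈𝒦_h, and define 𝐩 on (G∪{e})² by 𝐩(γ,γ̄) = 𝐜(i,i+he_j,γ,γ̄)/𝒯 for (γ,γ̄)≠(e,e) and 𝐩(e,e) = 1 − Σ_{(γ,γ̄)≠(e,e)} 𝐜(i,i+he_j,γ,γ̄)/𝒯. Then 𝐩 is a probability distribution on (G∪{e})², its marginals reproduce the one-step kernels, i.e. for every x∈𝒦_h one has Σ_{γ,γ̄ : γi=x} 𝐩(γ,γ̄) = π(i,x) and Σ_{γ,γ̄ : γ̄(i+he_j)=x} 𝐩(γ,γ̄) = π(i+he_j,x), and Σ_{γ,γ̄∈G∪{e}} 𝐩(γ,γ̄)·dist(γi, γ̄(i+he_j)) ≤ (1 − κ_φ·τ)·dist(i, i+he_j) = (1 − κ_φ·τ)·h. -/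

import Mathlib

open scoped BigOperators Classical RealInnerProductSpace
open Finset MeasureTheory

noncomputable section

/-- Points of the state space `ℝᵈ` with the Euclidean norm. -/
abbrev Pt (d : ℕ) : Type := EuclideanSpace ℝ (Fin d)

/-- The set `G` of moves `+_j`, `-_j`. -/
inductive Move (d : ℕ) : Type where
  | pos : Fin d → Move d
  | neg : Fin d → Move d
  deriving DecidableEq, Fintype

namespace Move

/-- The direction of a move. -/
def dir {d : ℕ} : Move d → Fin d
  | pos j => j
  | neg j => j

/-- Action of a move on `ℝᵈ`: `(±_j) x = x ± h eⱼ`. -/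
def act {d : ℕ} (h : ℝ) : Move d → Pt d → Pt d
  | pos j, x => x + EuclideanSpace.single j h
  | neg j, x => x - EuclideanSpace.single j h

end Move

/-- Action of a move in `G ∪ {e}` (`none` is the null move `e`). -/
def actO {d : ℕ} (h : ℝ) : Option (Move d) → Pt d → Pt d
  | none, x => x
  | some γ, x => γ.act h x

/-- The grid `𝒦_h` of cell centers, where `N = 2K/h`. -/
def grid (d : ℕ) (K h : ℝ) (N : ℕ) : Finset (Pt d) :=
  Finset.image
    (fun n : Fin d → Fin N =>
      (EuclideanSpace.equiv (Fin d) ℝ).symm fun j => -K + h * ((n j : ℕ) + 1) - h / 2)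
    Finset.univ

/-- The averaged potential `V^h`. -/
def Vh {d : ℕ} (h : ℝ) (V : Pt d → ℝ) (x : Pt d) : ℝ :=
  (1 / h ^ d) * ∫ s in {s : Pt d | ∀ j, s j ∈ Set.Icc (-(h / 2)) (h / 2)}, V (x + s)

/-- The one-dimensional averaged potential `V_j^h`. -/
def Vjh (h : ℝ) (W : ℝ → ℝ) (x : ℝ) : ℝ :=
  (1 / h) * ∫ s in Set.Icc (-(h / 2)) (h / 2), W (x + s)

/-- The transition rates `c(x, γ)`. -/
def rate (d : ℕ) (K h σ : ℝ) (N : ℕ) (V : Pt d → ℝ) (x : Pt d) (γ : Move d) : ℝ :=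
  if x ∈ grid d K h N ∧ γ.act h x ∈ grid d K h N then
    σ ^ 2 / h ^ 2 * Real.exp (-(Vh h V (γ.act h x) - Vh h V x) / (2 * σ ^ 2))
  else 0

/-- The generator `L_h`. -/
def gen (d : ℕ) (K h σ : ℝ) (N : ℕ) (V : Pt d → ℝ) (f : Pt d → ℝ) (i : Pt d) : ℝ :=
  ∑ γ : Move d, rate d K h σ N V i γ * (f (γ.act h i) - f i)

/-- The normalization constant `Z`. -/
def Znorm (d : ℕ) (K h σ : ℝ) (N : ℕ) (V : Pt d → ℝ) : ℝ :=
  ∑ k ∈ grid d K h N, Real.exp (-Vh h V k / σ ^ 2)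

/-- The invariant measure `m_h`. -/
def mh (d : ℕ) (K h σ : ℝ) (N : ℕ) (V : Pt d → ℝ) (i : Pt d) : ℝ :=
  Real.exp (-Vh h V i / σ ^ 2) / Znorm d K h σ N V

/-- `κ₊(i,j)`. -/
def kplus (d : ℕ) (K h σ : ℝ) (N : ℕ) (V : Pt d → ℝ) (i : Pt d) (j : Fin d) : ℝ :=
  rate d K h σ N V i (Move.pos j) - rate d K h σ N V ((Move.pos j).act h i) (Move.pos j)
    - ∑ γ ∈ Finset.univ.filter fun γ : Move d => γ.dir ≠ j,
        max (rate d K h σ N V ((Move.pos j).act h i) γ - rate d K h σ N V i γ) 0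

/-- `κ₋(i,j)`. -/
def kminus (d : ℕ) (K h σ : ℝ) (N : ℕ) (V : Pt d → ℝ) (i : Pt d) (j : Fin d) : ℝ :=
  rate d K h σ N V i (Move.neg j) - rate d K h σ N V ((Move.neg j).act h i) (Move.neg j)
    - ∑ γ ∈ Finset.univ.filter fun γ : Move d => γ.dir ≠ j,
        max (rate d K h σ N V ((Move.neg j).act h i) γ - rate d K h σ N V i γ) 0

/-- Assumption (A3). -/
def A3 (d : ℕ) (K h σ : ℝ) (N : ℕ) (V : Pt d → ℝ) : Prop :=
  (∀ j : Fin d, ∀ i ∈ grid d K h N, (Move.pos j).act h i ∈ grid d K h N →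
      0 < kplus d K h σ N V i j) ∧
  (∀ j : Fin d, ∀ i ∈ grid d K h N, (Move.neg j).act h i ∈ grid d K h N →
      0 < kminus d K h σ N V i j)

/-- `κ_φ = min {κ₊(i,j) + κ₋(i+heⱼ,j)}`. -/
def kappaPhi (d : ℕ) (K h σ : ℝ) (N : ℕ) (V : Pt d → ℝ) : ℝ :=
  sInf { r : ℝ | ∃ j : Fin d, ∃ i ∈ grid d K h N, (Move.pos j).act h i ∈ grid d K h N ∧
    r = kplus d K h σ N V i j + kminus d K h σ N V ((Move.pos j).act h i) j }

/-- The φ-entropy `H^φ(f | m_h)`. -/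
def entPhi (d : ℕ) (K h σ : ℝ) (N : ℕ) (V : Pt d → ℝ) (φ : ℝ → ℝ) (f : Pt d → ℝ) : ℝ :=
  ∑ i ∈ grid d K h N, φ (f i) * mh d K h σ N V i
    - φ (∑ i ∈ grid d K h N, f i * mh d K h σ N V i)

/-- The Dirichlet form `E(f,g)`. -/
def dirichlet (d : ℕ) (K h σ : ℝ) (N : ℕ) (V : Pt d → ℝ) (f g : Pt d → ℝ) : ℝ :=
  -∑ i ∈ grid d K h N, f i * gen d K h σ N V g i * mh d K h σ N V i

/-- Assumption (A1) on the entropy density `φ`. -/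
def A1 (φ : ℝ → ℝ) : Prop :=
  ContinuousOn φ (Set.Ici 0) ∧ (∀ x ∈ Set.Ici (0 : ℝ), 0 ≤ φ x) ∧
  ConvexOn ℝ (Set.Ici 0) φ ∧
  (∀ x ∈ Set.Ioi (0 : ℝ), DifferentiableAt ℝ φ x) ∧
  ContinuousOn (deriv φ) (Set.Ioi 0) ∧
  ConvexOn ℝ (Set.Ioi 0 ×ˢ Set.Ioi 0)
    (fun p : ℝ × ℝ => (deriv φ p.1 - deriv φ p.2) * (p.1 - p.2))

/-- φ is continuous, nonnegative and convex on `[0,∞)`, and C¹ on `(0,∞)`. -/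
def PhiRegular (φ : ℝ → ℝ) : Prop :=
  ContinuousOn φ (Set.Ici 0) ∧ (∀ x ∈ Set.Ici (0 : ℝ), 0 ≤ φ x) ∧
  ConvexOn ℝ (Set.Ici 0) φ ∧
  (∀ x ∈ Set.Ioi (0 : ℝ), DifferentiableAt ℝ φ x) ∧
  ContinuousOn (deriv φ) (Set.Ioi 0)

/-- `f^φ(x, y) = (φ'(f x) - φ'(f y)) (f x - f y)`. -/
def fphi {d : ℕ} (φ : ℝ → ℝ) (f : Pt d → ℝ) (x y : Pt d) : ℝ :=
  (deriv φ (f x) - deriv φ (f y)) * (f x - f y)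

/-- Coupling rates `𝐜(i, i+heⱼ, γ, γ̄)` for the neighboring pair `(i, i+heⱼ)`. -/
def crate (d : ℕ) (K h σ : ℝ) (N : ℕ) (V : Pt d → ℝ) (i : Pt d) (j : Fin d) :
    Option (Move d) → Option (Move d) → ℝ
  | some a, some b =>
      if a = b then min (rate d K h σ N V i a) (rate d K h σ N V ((Move.pos j).act h i) a)
      else if a = Move.pos j ∧ b.dir ≠ j then
        max (rate d K h σ N V ((Move.pos j).act h i) b - rate d K h σ N V i b) 0
      else if a.dir ≠ j ∧ b = Move.neg j then
        max (rate d K h σ N V i a - rate d K h σ N V ((Move.pos j).act h i) a) 0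
      else 0
  | some a, none => if a = Move.pos j then kplus d K h σ N V i j else 0
  | none, some b => if b = Move.neg j then kminus d K h σ N V ((Move.pos j).act h i) j else 0
  | none, none => 0

/-- Coupling rates `𝐜(i, δ i, γ, γ̄)` for an arbitrary move `δ ∈ G`. -/
def cpl (d : ℕ) (K h σ : ℝ) (N : ℕ) (V : Pt d → ℝ) (i : Pt d) (δ : Move d)
    (γ γb : Option (Move d)) : ℝ :=
  match δ with
  | Move.pos j => crate d K h σ N V i j γ γb
  | Move.neg j => crate d K h σ N V ((Move.neg j).act h i) j γb γ

/-- Synchronous coupling rates `𝐜(i, k, γ, γ̄)`. -/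
def syncRate (d : ℕ) (K h σ : ℝ) (N : ℕ) (V : Pt d → ℝ) (i k : Pt d) :
    Option (Move d) → Option (Move d) → ℝ
  | some a, some b => if a = b then min (rate d K h σ N V i a) (rate d K h σ N V k a) else 0
  | some a, none => max (rate d K h σ N V i a - rate d K h σ N V k a) 0
  | none, some b => max (rate d K h σ N V k b - rate d K h σ N V i b) 0
  | none, none => 0

/-- The graph (ℓ¹) distance. -/
def graphDist {d : ℕ} (x y : Pt d) : ℝ := ∑ j, |x j - y j|

/-- The generator matrix `Q`. -/
def Qmat (d : ℕ) (K h σ : ℝ) (N : ℕ) (V : Pt d → ℝ) :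
    Matrix {x // x ∈ grid d K h N} {x // x ∈ grid d K h N} ℝ := fun i k =>
  (∑ γ : Move d, if γ.act h i.1 = k.1 then rate d K h σ N V i.1 γ else 0)
    - (if i = k then ∑ γ : Move d, rate d K h σ N V i.1 γ else 0)

/-- The semigroup `S_t = e^{tQ}` acting on functions. -/
def St (d : ℕ) (K h σ : ℝ) (N : ℕ) (V : Pt d → ℝ) (t : ℝ) (f : Pt d → ℝ) (i : Pt d) : ℝ :=
  if hi : i ∈ grid d K h N then
    ∑ k : {x // x ∈ grid d K h N},
      NormedSpace.exp (t • Qmat d K h σ N V) ⟨i, hi⟩ k * f k.1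
  else 0

/-- The transition function `ν ↦ ν p_t` acting on measures. -/
def measPt (d : ℕ) (K h σ : ℝ) (N : ℕ) (V : Pt d → ℝ) (t : ℝ) (ν : Pt d → ℝ) (k : Pt d) : ℝ :=
  if hk : k ∈ grid d K h N then
    ∑ i : {x // x ∈ grid d K h N},
      ν i.1 * NormedSpace.exp (t • Qmat d K h σ N V) i ⟨k, hk⟩
  else 0

/-- `ν` is a probability measure on the grid. -/
def IsProbOn (d : ℕ) (K h : ℝ) (N : ℕ) (ν : Pt d → ℝ) : Prop :=
  (∀ x ∈ grid d K h N, 0 ≤ ν x) ∧ ∑ x ∈ grid d K h N, ν x = 1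

/-- Optimal transport cost between `ν` and `η` for the cost function `D`. -/
def Wgen (d : ℕ) (K h : ℝ) (N : ℕ) (D : Pt d → Pt d → ℝ) (ν η : Pt d → ℝ) : ℝ :=
  sInf { r : ℝ | ∃ γc : Pt d → Pt d → ℝ,
    (∀ x ∈ grid d K h N, ∀ y ∈ grid d K h N, 0 ≤ γc x y) ∧
    (∀ x ∈ grid d K h N, ∑ y ∈ grid d K h N, γc x y = ν x) ∧
    (∀ y ∈ grid d K h N, ∑ x ∈ grid d K h N, γc x y = η y) ∧
    r = ∑ x ∈ grid d K h N, ∑ y ∈ grid d K h N, D x y * γc x y }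

/-- The `L^p` Wasserstein distance w.r.t. the Euclidean distance. -/
def Wp (d : ℕ) (K h : ℝ) (N : ℕ) (p : ℝ) (ν η : Pt d → ℝ) : ℝ :=
  (Wgen d K h N (fun x y => ‖x - y‖ ^ p) ν η) ^ (1 / p)

/-- The `L¹` Wasserstein distance w.r.t. the Euclidean distance. -/
def W1 (d : ℕ) (K h : ℝ) (N : ℕ) (ν η : Pt d → ℝ) : ℝ :=
  Wgen d K h N (fun x y => ‖x - y‖) ν η

/-- The `L¹` Wasserstein distance w.r.t. the graph distance. -/
def Wd1 (d : ℕ) (K h : ℝ) (N : ℕ) (ν η : Pt d → ℝ) : ℝ :=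
  Wgen d K h N graphDist ν η

/-- The rescaling factor `𝒯 = 2 max_i Σ_γ c(i,γ)`. -/
def Tcal (d : ℕ) (K h σ : ℝ) (N : ℕ) (V : Pt d → ℝ) : ℝ :=
  2 * sSup ((fun i => ∑ γ : Move d, rate d K h σ N V i γ) '' (grid d K h N : Set (Pt d)))

/-- The time step `τ = 1/𝒯`. -/
def tauStep (d : ℕ) (K h σ : ℝ) (N : ℕ) (V : Pt d → ℝ) : ℝ :=
  1 / Tcal d K h σ N V

/-- The rescaled jump rates `p(i,γ) = c(i,γ)/𝒯`. -/
def prate (d : ℕ) (K h σ : ℝ) (N : ℕ) (V : Pt d → ℝ) (i : Pt d) (γ : Move d) : ℝ :=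
  rate d K h σ N V i γ / Tcal d K h σ N V

/-- The transition matrix `π` acting on functions: `(π f)(i) = Σ_k π(i,k) f(k)`. -/
def piStep (d : ℕ) (K h σ : ℝ) (N : ℕ) (V : Pt d → ℝ) (f : Pt d → ℝ) (i : Pt d) : ℝ :=
  f i + ∑ γ : Move d, prate d K h σ N V i γ * (f (γ.act h i) - f i)

/-- The entries `π(i,k)` of the transition matrix. -/
def piKernel (d : ℕ) (K h σ : ℝ) (N : ℕ) (V : Pt d → ℝ) (i k : Pt d) : ℝ :=
  (∑ γ : Move d, if γ.act h i = k then prate d K h σ N V i γ else 0)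
    + (if i = k then 1 - ∑ γ : Move d, prate d K h σ N V i γ else 0)

/-- The transition matrix `π` acting on measures: `(ν π)(k) = Σ_i ν(i) π(i,k)`. -/
def piMeas (d : ℕ) (K h σ : ℝ) (N : ℕ) (V : Pt d → ℝ) (ν : Pt d → ℝ) (k : Pt d) : ℝ :=
  if k ∈ grid d K h N then ∑ i ∈ grid d K h N, ν i * piKernel d K h σ N V i k else 0

/-- The Fisher information `F(f)`. -/
def fisher (d : ℕ) (K h σ : ℝ) (N : ℕ) (V : Pt d → ℝ) (φ : ℝ → ℝ) (f : Pt d → ℝ) : ℝ :=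
  (1 / 2) * ∑ i ∈ grid d K h N, ∑ γ : Move d,
    prate d K h σ N V i γ * (deriv φ (f (γ.act h i)) - deriv φ (f i))
      * (f (γ.act h i) - f i) * mh d K h σ N V i

/-- The entropy densities `φ_α` (with `φ₁(x) = x log x - x + 1`). -/
def phiAlpha (α : ℝ) (x : ℝ) : ℝ :=
  if α = 1 then x * Real.log x - x + 1 else (α - 1)⁻¹ * (x ^ α - x) - x + 1

/-- Assumption (A2): strong `κ`-convexity of `V` on `[-K,K]^d`. -/
def A2 (d : ℕ) (K : ℝ) (V : Pt d → ℝ) (κ : ℝ) : Prop :=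
  ∀ x y : Pt d, (∀ j, |x j| ≤ K) → (∀ j, |y j| ≤ K) →
    κ * ‖x - y‖ ^ 2 ≤ ⟪x - y, gradient V x - gradient V y⟫

/-- `V` is additive with components `Vs j`. -/
def IsAdditive (d : ℕ) (V : Pt d → ℝ) (Vs : Fin d → ℝ → ℝ) : Prop :=
  ∀ x : Pt d, V x = ∑ j, Vs j (x j)

/-- `∇V` is Lipschitz continuous with constant `L` on `[-K,K]^d`. -/
def GradLip (d : ℕ) (K : ℝ) (V : Pt d → ℝ) (L : ℝ) : Prop :=
  ∀ x y : Pt d, (∀ j, |x j| ≤ K) → (∀ j, |y j| ≤ K) →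
    ‖gradient V x - gradient V y‖ ≤ L * ‖x - y‖

/-- The basic assumptions on the discretization parameters. -/
def Params (d : ℕ) (K h σ : ℝ) (N : ℕ) (V : Pt d → ℝ) : Prop :=
  1 ≤ d ∧ 0 < K ∧ 0 < h ∧ (N : ℝ) * h = 2 * K ∧ 0 < σ ∧ ContDiff ℝ 2 V

/-- The discrete-time coupling `𝐩` for the neighboring pair `(i, i+heⱼ)`. -/
def pcoup (d : ℕ) (K h σ : ℝ) (N : ℕ) (V : Pt d → ℝ) (i : Pt d) (j : Fin d)
    (q : Option (Move d) × Option (Move d)) : ℝ :=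
  if q = (none, none) then
    1 - ∑ q' ∈ Finset.univ.filter
          (fun q' : Option (Move d) × Option (Move d) => q' ≠ (none, none)),
        crate d K h σ N V i j q'.1 q'.2 / Tcal d K h σ N V
  else crate d K h σ N V i j q.1 q.2 / Tcal d K h σ N V

end

/-!
The coupling `𝐩` is the lazy discretisation of the coupling rates `𝐜`: a pair of moves
`(γ, γ̄) ≠ (e, e)` is taken with probability `𝐜(γ, γ̄)/𝒯` and the remaining mass sits on
`(e, e)`, which is nonnegative because `𝒯` is twice the largest total jump rate. Under (A3) the
row sums of `𝐜` are the rates `c(i, ·)` and its column sums the rates `c(i + heⱼ, ·)`, so the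
marginals of `𝐩` are `π(i, ·)` and `π(i + heⱼ, ·)`. Every pair of moves charged by `𝐜` keeps the
two walkers at graph distance at most `h`, except `(+ⱼ, e)` and `(e, -ⱼ)`, which make them meet;
these carry mass `(κ₊(i,j) + κ₋(i+heⱼ,j))/𝒯 ≥ κ_φ τ`.
-/

section LazyCoupling

variable {α : Type*} [Fintype α] [DecidableEq α] (c : Option α → Option α → ℝ) (T : ℝ)

noncomputable def lazyCoupling (q : Option α × Option α) : ℝ :=
  if q = (none, none) then
    1 - ∑ q' ∈ Finset.univ.filter (fun q' : Option α × Option α => q' ≠ (none, none)),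
        c q'.1 q'.2 / T
  else c q.1 q.2 / T

theorem lazyCoupling_of_ne {q : Option α × Option α} (hq : q ≠ (none, none)) :
    lazyCoupling c T q = c q.1 q.2 / T :=
  if_neg hq

theorem lazyCoupling_none_none :
    lazyCoupling c T (none, none)
      = 1 - (∑ q : Option α × Option α, c q.1 q.2 - c none none) / T := by
  rw [lazyCoupling, if_pos rfl, ← Finset.sum_div, Finset.filter_ne',
    Finset.sum_erase_eq_sub (Finset.mem_univ _)]

theorem sum_lazyCoupling_some (a : α) :
    ∑ b, lazyCoupling c T (some a, b) = (∑ b, c (some a) b) / T := by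
  rw [Finset.sum_div]
  exact Finset.sum_congr rfl fun b _ => lazyCoupling_of_ne c T (by simp)

theorem sum_lazyCoupling_none :
    ∑ b, lazyCoupling c T (none, b) = 1 - (∑ a, ∑ b, c (some a) b) / T := by
  have hjump : ∑ b, lazyCoupling c T (none, some b) = (∑ b, c none (some b)) / T := by
    rw [Finset.sum_div]
    exact Finset.sum_congr rfl fun b _ => lazyCoupling_of_ne c T (by simp)
  rw [Fintype.sum_option, hjump, lazyCoupling_none_none, Fintype.sum_prod_type,
    Fintype.sum_option, Fintype.sum_option]
  ring

theorem sum_lazyCoupling : ∑ q, lazyCoupling c T q = 1 := by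
  rw [Fintype.sum_prod_type, Fintype.sum_option, sum_lazyCoupling_none]
  simp only [sum_lazyCoupling_some, ← Finset.sum_div]
  ring

theorem lazyCoupling_nonneg (hc : ∀ a b, 0 ≤ c a b) {R C : α → ℝ}
    (hR : ∀ a, ∑ b, c (some a) b = R a) (hC : ∀ b, ∑ a, c a (some b) = C b)
    (hT : ∑ a, R a + ∑ b, C b ≤ T) (q : Option α × Option α) :
    0 ≤ lazyCoupling c T q := by
  have hT₀ : 0 ≤ T := by
    refine le_trans (add_nonneg ?_ ?_) hT <;> refine Finset.sum_nonneg fun x _ => ?_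
    · rw [← hR]; exact Finset.sum_nonneg fun _ _ => hc _ _
    · rw [← hC]; exact Finset.sum_nonneg fun _ _ => hc _ _
  by_cases hq : q = (none, none)
  · subst hq
    rw [lazyCoupling_none_none, sub_nonneg]
    refine div_le_one_of_le₀ (le_trans ?_ hT) hT₀
    calc ∑ q : Option α × Option α, c q.1 q.2 - c none none = ∑ a, R a + ∑ b, c none (some b) := by
          rw [Fintype.sum_prod_type, Fintype.sum_option (fun a => ∑ b, c a b),
            Fintype.sum_option (c none)]
          simp only [hR]; ring
      _ ≤ ∑ a, R a + ∑ b, C b := by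
          gcongr with b
          rw [← hC b]
          exact Finset.single_le_sum (fun a _ => hc a _) (Finset.mem_univ none)
  · rw [lazyCoupling_of_ne c T hq]
    exact div_nonneg (hc _ _) hT₀

theorem sum_ite_fst_lazyCoupling {β : Type*} [DecidableEq β] (f : Option α → β) (x : β)
    {R : α → ℝ} (hR : ∀ a, ∑ b, c (some a) b = R a) :
    ∑ q, (if f q.1 = x then lazyCoupling c T q else 0)
      = (∑ a, if f (some a) = x then R a / T else 0)
        + if f none = x then 1 - ∑ a, R a / T else 0 := by
  calc ∑ q, (if f q.1 = x then lazyCoupling c T q else 0)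
      = ∑ γ, if f γ = x then ∑ b, lazyCoupling c T (γ, b) else 0 := by
        rw [Fintype.sum_prod_type]
        refine Finset.sum_congr rfl fun γ _ => ?_
        by_cases hγ : f γ = x <;> simp only [hγ, if_true, if_false, Finset.sum_const_zero]
    _ = _ := by
        rw [Fintype.sum_option]
        simp only [sum_lazyCoupling_none, sum_lazyCoupling_some, hR, Finset.sum_div]
        ring

theorem lazyCoupling_swap (q : Option α × Option α) :
    lazyCoupling (flip c) T q.swap = lazyCoupling c T q := by
  by_cases hq : q = (none, none)
  · subst hq
    rw [Prod.swap_prod_mk, lazyCoupling_none_none, lazyCoupling_none_none,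
      Fintype.sum_prod_type, Fintype.sum_prod_type_right]
    rfl
  · rw [lazyCoupling_of_ne _ _ (by simpa [Prod.swap_eq_iff_eq_swap] using hq),
      lazyCoupling_of_ne c T hq]
    rfl

theorem sum_ite_snd_lazyCoupling {β : Type*} [DecidableEq β] (f : Option α → β) (x : β)
    {C : α → ℝ} (hC : ∀ b, ∑ a, c a (some b) = C b) :
    ∑ q, (if f q.2 = x then lazyCoupling c T q else 0)
      = (∑ b, if f (some b) = x then C b / T else 0)
        + if f none = x then 1 - ∑ b, C b / T else 0 := by
  rw [← sum_ite_fst_lazyCoupling (flip c) T f x hC]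
  exact Fintype.sum_equiv (Equiv.prodComm _ _) _ _ fun q => by
    rw [← lazyCoupling_swap c T q]; rfl

end LazyCoupling

theorem Finset.sum_mul_le_of_eq_zero {ι : Type*} [Fintype ι] [DecidableEq ι] {p D : ι → ℝ}
    {s : Finset ι} {r : ℝ} (hs : ∀ q ∈ s, D q = 0) (hle : ∀ q ∉ s, p q * D q ≤ p q * r) :
    ∑ q, p q * D q ≤ (∑ q, p q - ∑ q ∈ s, p q) * r := by
  rw [← Finset.sum_compl_add_sum s, ← Finset.sum_compl_add_sum s p,
    Finset.sum_eq_zero (s := s) fun q hq => by rw [hs q hq, mul_zero], add_zero,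
    add_sub_cancel_right, Finset.sum_mul]
  exact Finset.sum_le_sum fun q hq => hle q (Finset.mem_compl.mp hq)

section GraphDist

variable {d : ℕ}

theorem graphDist_self (x : Pt d) : graphDist x x = 0 := by
  simp [graphDist]

theorem graphDist_comm (x y : Pt d) : graphDist x y = graphDist y x := by
  simp only [graphDist, abs_sub_comm]

theorem Move.graphDist_act_act (h : ℝ) (γ : Move d) (x y : Pt d) :
    graphDist (γ.act h x) (γ.act h y) = graphDist x y := by
  cases γ <;> simp [graphDist, Move.act]

theorem Move.graphDist_self_act (h : ℝ) (γ : Move d) (x : Pt d) :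
    graphDist x (γ.act h x) = |h| := by
  cases γ <;> simp [graphDist, Move.act, PiLp.single_apply, abs_ite]

theorem Move.neg_act_pos_act (h : ℝ) (j : Fin d) (x : Pt d) :
    (Move.neg j).act h ((Move.pos j).act h x) = x := by
  simp [Move.act]

end GraphDist

section CouplingRates

variable {d : ℕ} {K h σ : ℝ} {N : ℕ} {V : Pt d → ℝ} {i : Pt d} {j : Fin d}

theorem rate_nonneg (x : Pt d) (γ : Move d) : 0 ≤ rate d K h σ N V x γ := by
  unfold rate
  split_ifs <;> positivity

theorem Move.sum_eq_pos_add_neg_add_sum_dir_ne (j : Fin d) (f : Move d → ℝ) :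
    ∑ γ, f γ = f (Move.pos j) + f (Move.neg j)
      + ∑ γ ∈ Finset.univ.filter (fun γ : Move d => γ.dir ≠ j), f γ := by
  rw [← Finset.sum_filter_add_sum_filter_not Finset.univ (fun γ : Move d => γ.dir = j)]
  have hdir : Finset.univ.filter (fun γ : Move d => γ.dir = j) = {Move.pos j, Move.neg j} := by
    ext γ
    cases γ <;> simp [Move.dir, eq_comm]
  rw [hdir, Finset.sum_pair (by simp)]

theorem Move.dir_ne_of_ne {a : Move d} (hp : a ≠ Move.pos j) (hn : a ≠ Move.neg j) :
    a.dir ≠ j := by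
  cases a <;> rintro rfl <;> simp_all [Move.dir]

theorem Move.ne_pos_of_dir_ne {a : Move d} (ha : a.dir ≠ j) : a ≠ Move.pos j := by
  rintro rfl; exact ha rfl

theorem Move.ne_neg_of_dir_ne {a : Move d} (ha : a.dir ≠ j) : a ≠ Move.neg j := by
  rintro rfl; exact ha rfl

theorem rate_pos_act_le_of_kplus_nonneg (hk : 0 ≤ kplus d K h σ N V i j) :
    rate d K h σ N V ((Move.pos j).act h i) (Move.pos j) ≤ rate d K h σ N V i (Move.pos j) := by
  have hmax : 0 ≤ ∑ γ ∈ Finset.univ.filter (fun γ : Move d => γ.dir ≠ j),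
      max (rate d K h σ N V ((Move.pos j).act h i) γ - rate d K h σ N V i γ) 0 :=
    Finset.sum_nonneg fun _ _ => le_max_right _ _
  rw [kplus] at hk
  linarith

theorem rate_neg_le_of_kminus_nonneg (hk : 0 ≤ kminus d K h σ N V ((Move.pos j).act h i) j) :
    rate d K h σ N V i (Move.neg j) ≤ rate d K h σ N V ((Move.pos j).act h i) (Move.neg j) := by
  have hmax : 0 ≤ ∑ γ ∈ Finset.univ.filter (fun γ : Move d => γ.dir ≠ j),
      max (rate d K h σ N V i γ - rate d K h σ N V ((Move.pos j).act h i) γ) 0 :=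
    Finset.sum_nonneg fun _ _ => le_max_right _ _
  rw [kminus, Move.neg_act_pos_act] at hk
  linarith

theorem crate_nonneg (hkp : 0 ≤ kplus d K h σ N V i j)
    (hkm : 0 ≤ kminus d K h σ N V ((Move.pos j).act h i) j) (a b : Option (Move d)) :
    0 ≤ crate d K h σ N V i j a b := by
  rcases a with _ | a <;> rcases b with _ | b <;> simp only [crate] <;> (try split_ifs) <;>
    first
    | exact le_rfl
    | exact hkp
    | exact hkm
    | exact le_max_right _ _
    | exact le_min (rate_nonneg _ _) (rate_nonneg _ _)

theorem sum_crate_some_left (hkp : 0 ≤ kplus d K h σ N V i j)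
    (hkm : 0 ≤ kminus d K h σ N V ((Move.pos j).act h i) j) (a : Move d) :
    ∑ b, crate d K h σ N V i j (some a) b = rate d K h σ N V i a := by
  rw [Fintype.sum_option, Move.sum_eq_pos_add_neg_add_sum_dir_ne j]
  by_cases hap : a = Move.pos j
  · subst hap
    have hrest : ∑ γ ∈ Finset.univ.filter (fun γ : Move d => γ.dir ≠ j),
        crate d K h σ N V i j (some (Move.pos j)) (some γ)
        = ∑ γ ∈ Finset.univ.filter (fun γ : Move d => γ.dir ≠ j),
          max (rate d K h σ N V ((Move.pos j).act h i) γ - rate d K h σ N V i γ) 0 :=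
      Finset.sum_congr rfl fun γ hγ => by
        replace hγ : γ.dir ≠ j := (Finset.mem_filter.1 hγ).2
        simp [crate, hγ, (Move.ne_pos_of_dir_ne hγ).symm]
    rw [hrest]
    simp [crate, Move.dir, min_eq_right (rate_pos_act_le_of_kplus_nonneg hkp), kplus]
  by_cases han : a = Move.neg j
  · subst han
    have hrest : ∑ γ ∈ Finset.univ.filter (fun γ : Move d => γ.dir ≠ j),
        crate d K h σ N V i j (some (Move.neg j)) (some γ) = 0 :=
      Finset.sum_eq_zero fun γ hγ => by
        replace hγ : γ.dir ≠ j := (Finset.mem_filter.1 hγ).2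
        simp [crate, Move.dir, (Move.ne_neg_of_dir_ne hγ).symm]
    rw [hrest]
    simp [crate, Move.dir, min_eq_left (rate_neg_le_of_kminus_nonneg hkm)]
  have had := Move.dir_ne_of_ne hap han
  have hrest : ∑ γ ∈ Finset.univ.filter (fun γ : Move d => γ.dir ≠ j),
      crate d K h σ N V i j (some a) (some γ)
      = min (rate d K h σ N V i a) (rate d K h σ N V ((Move.pos j).act h i) a) := by
    refine (Finset.sum_eq_single_of_mem a (by simp [had]) fun γ hγ hne => ?_).trans
      (by simp [crate])
    replace hγ : γ.dir ≠ j := (Finset.mem_filter.1 hγ).2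
    simp [crate, Ne.symm hne, hap, Move.ne_neg_of_dir_ne hγ]
  rw [hrest]
  rcases le_total (rate d K h σ N V i a) (rate d K h σ N V ((Move.pos j).act h i) a)
    with hle | hle <;> simp [crate, hap, han, had, hle]

theorem sum_crate_some_right (hkp : 0 ≤ kplus d K h σ N V i j)
    (hkm : 0 ≤ kminus d K h σ N V ((Move.pos j).act h i) j) (b : Move d) :
    ∑ a, crate d K h σ N V i j a (some b) = rate d K h σ N V ((Move.pos j).act h i) b := by
  rw [Fintype.sum_option, Move.sum_eq_pos_add_neg_add_sum_dir_ne j]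
  by_cases hbp : b = Move.pos j
  · subst hbp
    have hrest : ∑ γ ∈ Finset.univ.filter (fun γ : Move d => γ.dir ≠ j),
        crate d K h σ N V i j (some γ) (some (Move.pos j)) = 0 :=
      Finset.sum_eq_zero fun γ hγ => by
        replace hγ : γ.dir ≠ j := (Finset.mem_filter.1 hγ).2
        simp [crate, Move.dir, Move.ne_pos_of_dir_ne hγ]
    rw [hrest]
    simp [crate, Move.dir, min_eq_right (rate_pos_act_le_of_kplus_nonneg hkp)]
  by_cases hbn : b = Move.neg j
  · subst hbn
    have hrest : ∑ γ ∈ Finset.univ.filter (fun γ : Move d => γ.dir ≠ j),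
        crate d K h σ N V i j (some γ) (some (Move.neg j))
        = ∑ γ ∈ Finset.univ.filter (fun γ : Move d => γ.dir ≠ j),
          max (rate d K h σ N V i γ - rate d K h σ N V ((Move.pos j).act h i) γ) 0 :=
      Finset.sum_congr rfl fun γ hγ => by
        replace hγ : γ.dir ≠ j := (Finset.mem_filter.1 hγ).2
        simp [crate, hγ, Move.ne_pos_of_dir_ne hγ, Move.ne_neg_of_dir_ne hγ]
    rw [hrest]
    simp [crate, Move.dir, min_eq_left (rate_neg_le_of_kminus_nonneg hkm), kminus,
      Move.neg_act_pos_act]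
  have hbd := Move.dir_ne_of_ne hbp hbn
  have hrest : ∑ γ ∈ Finset.univ.filter (fun γ : Move d => γ.dir ≠ j),
      crate d K h σ N V i j (some γ) (some b)
      = min (rate d K h σ N V i b) (rate d K h σ N V ((Move.pos j).act h i) b) := by
    refine (Finset.sum_eq_single_of_mem b (by simp [hbd]) fun γ hγ hne => ?_).trans
      (by simp [crate])
    replace hγ : γ.dir ≠ j := (Finset.mem_filter.1 hγ).2
    simp [crate, hne, hbn, Move.ne_pos_of_dir_ne hγ]
  rw [hrest]
  rcases le_total (rate d K h σ N V i b) (rate d K h σ N V ((Move.pos j).act h i) b)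
    with hle | hle <;> simp [crate, hbn, Ne.symm hbp, Ne.symm hbn, hbd, hle]

theorem graphDist_le_of_crate_ne_zero (hh : 0 ≤ h) {a b : Option (Move d)}
    (hp : (a, b) ≠ (some (Move.pos j), none)) (hn : (a, b) ≠ (none, some (Move.neg j)))
    (hc : crate d K h σ N V i j a b ≠ 0) :
    graphDist (actO h a i) (actO h b ((Move.pos j).act h i)) ≤ h := by
  rcases a with _ | a <;> rcases b with _ | b
  · exact absurd rfl hc
  · simp only [crate, ne_eq, ite_eq_right_iff, Classical.not_imp] at hc
    exact absurd (by rw [hc.1]) hn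
  · simp only [crate, ne_eq, ite_eq_right_iff, Classical.not_imp] at hc
    exact absurd (by rw [hc.1]) hp
  · simp only [actO]
    simp only [crate] at hc
    split_ifs at hc with hab hpos hneg
    · rw [hab, Move.graphDist_act_act, Move.graphDist_self_act, abs_of_nonneg hh]
    · rw [hpos.1, Move.graphDist_self_act, abs_of_nonneg hh]
    · rw [hneg.2, Move.neg_act_pos_act, graphDist_comm, Move.graphDist_self_act, abs_of_nonneg hh]
    · exact absurd rfl hc

end CouplingRates

section DiscreteTime

variable {d : ℕ} {K h σ : ℝ} {N : ℕ} {V : Pt d → ℝ} {i : Pt d} {j : Fin d}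

theorem sum_rate_le_Tcal_div_two {x : Pt d} (hx : x ∈ grid d K h N) :
    ∑ γ, rate d K h σ N V x γ ≤ Tcal d K h σ N V / 2 := by
  have hbdd := ((grid d K h N).finite_toSet.image
    fun x => ∑ γ, rate d K h σ N V x γ).bddAbove
  rw [Tcal, mul_div_cancel_left₀ _ two_ne_zero]
  exact le_csSup hbdd ⟨x, hx, rfl⟩

theorem kappaPhi_le (hi : i ∈ grid d K h N) (hij : (Move.pos j).act h i ∈ grid d K h N) :
    kappaPhi d K h σ N V ≤ kplus d K h σ N V i j + kminus d K h σ N V ((Move.pos j).act h i) j := by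
  refine csInf_le ?_ ⟨j, i, hi, hij, rfl⟩
  refine ((Set.finite_range fun p : Fin d × grid d K h N =>
    kplus d K h σ N V p.2 p.1 + kminus d K h σ N V ((Move.pos p.1).act h p.2) p.1).subset
    ?_).bddBelow
  rintro r ⟨j', i', hi', -, rfl⟩
  exact ⟨(j', ⟨i', hi'⟩), rfl⟩

theorem pcoup_eq_lazyCoupling :
    pcoup d K h σ N V i j = lazyCoupling (crate d K h σ N V i j) (Tcal d K h σ N V) :=
  rfl

theorem sum_pcoup_mul_graphDist_le (hh : 0 ≤ h) (hi : i ∈ grid d K h N)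
    (hij : (Move.pos j).act h i ∈ grid d K h N) (hkp : 0 ≤ kplus d K h σ N V i j)
    (hkm : 0 ≤ kminus d K h σ N V ((Move.pos j).act h i) j) (hT : 0 ≤ Tcal d K h σ N V) :
    ∑ q, pcoup d K h σ N V i j q * graphDist (actO h q.1 i) (actO h q.2 ((Move.pos j).act h i))
      ≤ (1 - kappaPhi d K h σ N V * tauStep d K h σ N V) * h := by
  set S : Finset (Option (Move d) × Option (Move d)) :=
    {(some (Move.pos j), none), (none, some (Move.neg j))}
  have hS : ∀ q ∈ S, graphDist (actO h q.1 i) (actO h q.2 ((Move.pos j).act h i)) = 0 := by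
    simp only [S, Finset.mem_insert, Finset.mem_singleton]
    rintro q (rfl | rfl)
    · exact graphDist_self _
    · simp only [actO]
      rw [Move.neg_act_pos_act]
      exact graphDist_self _
  have hle : ∀ q ∉ S,
      pcoup d K h σ N V i j q * graphDist (actO h q.1 i) (actO h q.2 ((Move.pos j).act h i))
        ≤ pcoup d K h σ N V i j q * h := by
    intro q hq
    simp only [S, Finset.mem_insert, Finset.mem_singleton, not_or] at hq
    by_cases hee : q = (none, none)
    · subst hee
      simp only [actO]
      rw [Move.graphDist_self_act, abs_of_nonneg hh]
    rw [pcoup_eq_lazyCoupling, lazyCoupling_of_ne _ _ hee]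
    by_cases hc : crate d K h σ N V i j q.1 q.2 = 0
    · simp [hc]
    · exact mul_le_mul_of_nonneg_left (graphDist_le_of_crate_ne_zero hh hq.1 hq.2 hc)
        (div_nonneg (crate_nonneg hkp hkm _ _) hT)
  calc _ ≤ (∑ q, pcoup d K h σ N V i j q - ∑ q ∈ S, pcoup d K h σ N V i j q) * h :=
        Finset.sum_mul_le_of_eq_zero hS hle
    _ = (1 - (kplus d K h σ N V i j + kminus d K h σ N V ((Move.pos j).act h i) j)
          / Tcal d K h σ N V) * h := by
        rw [pcoup_eq_lazyCoupling, sum_lazyCoupling, Finset.sum_pair (by simp),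
          lazyCoupling_of_ne _ _ (by simp), lazyCoupling_of_ne _ _ (by simp)]
        simp only [crate, if_true]
        ring
    _ ≤ _ := by
        gcongr
        rw [tauStep, mul_one_div]
        exact div_le_div_of_nonneg_right (kappaPhi_le hi hij) hT

end DiscreteTime

/-- One-step path-coupling contraction for the discrete-time kernel. -/
theorem discrete_path_coupling_contraction
    (d : ℕ) (K h σ : ℝ) (N : ℕ) (V : Pt d → ℝ) (hp : Params d K h σ N V)
    (hA3 : A3 d K h σ N V) (j : Fin d) (i : Pt d)
    (hi : i ∈ grid d K h N) (hij : (Move.pos j).act h i ∈ grid d K h N) :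
    (∀ q : Option (Move d) × Option (Move d), 0 ≤ pcoup d K h σ N V i j q) ∧
    (∑ q : Option (Move d) × Option (Move d), pcoup d K h σ N V i j q = 1) ∧
    (∀ x ∈ grid d K h N,
      (∑ q : Option (Move d) × Option (Move d),
          if actO h q.1 i = x then pcoup d K h σ N V i j q else 0)
        = piKernel d K h σ N V i x) ∧
    (∀ x ∈ grid d K h N,
      (∑ q : Option (Move d) × Option (Move d),
          if actO h q.2 ((Move.pos j).act h i) = x then pcoup d K h σ N V i j q else 0)
        = piKernel d K h σ N V ((Move.pos j).act h i) x) ∧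
    (∑ q : Option (Move d) × Option (Move d),
        pcoup d K h σ N V i j q
          * graphDist (actO h q.1 i) (actO h q.2 ((Move.pos j).act h i)))
      ≤ (1 - kappaPhi d K h σ N V * tauStep d K h σ N V)
          * graphDist i ((Move.pos j).act h i) ∧
    graphDist i ((Move.pos j).act h i) = h := by
  have hh : 0 ≤ h := hp.2.2.1.le
  have hdist : graphDist i ((Move.pos j).act h i) = h := by
    rw [Move.graphDist_self_act, abs_of_nonneg hh]
  have hkp := (hA3.1 j i hi hij).le
  have hkm := (hA3.2 j _ hij (by rwa [Move.neg_act_pos_act])).le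
  have hrow := sum_crate_some_left hkp hkm
  have hcol := sum_crate_some_right hkp hkm
  have hRC : ∑ a, rate d K h σ N V i a + ∑ b, rate d K h σ N V ((Move.pos j).act h i) b
      ≤ Tcal d K h σ N V := by
    linarith [sum_rate_le_Tcal_div_two (σ := σ) (V := V) hi,
      sum_rate_le_Tcal_div_two (σ := σ) (V := V) hij]
  have hT : 0 ≤ Tcal d K h σ N V := le_trans
    (add_nonneg (Finset.sum_nonneg fun _ _ => rate_nonneg _ _)
      (Finset.sum_nonneg fun _ _ => rate_nonneg _ _)) hRC
  rw [pcoup_eq_lazyCoupling]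
  refine ⟨lazyCoupling_nonneg _ _ (crate_nonneg hkp hkm) hrow hcol hRC, sum_lazyCoupling _ _,
    fun x _ => ?_, fun x _ => ?_, ?_, hdist⟩
  · rw [sum_ite_fst_lazyCoupling _ _ (fun γ => actO h γ i) x hrow]
    rfl
  · rw [sum_ite_snd_lazyCoupling _ _ (fun γ => actO h γ ((Move.pos j).act h i)) x hcol]
    rfl
  · rw [hdist, ← pcoup_eq_lazyCoupling]
    exact sum_pcoup_mul_graphDist_le hh hi hij hkp hkm hT
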